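/- arXiv:2301.06718 — 5 statements merged into one kernel-verified Lean document; each statement's English description precedes it below -/
import Mathlib

section
/- Let Δ and Π be p×p real matrices. Then ‖Δ‖₁,₁ - ‖Δ + Π‖₁,₁ + ‖Π‖₁,₁ ≤ 2√|J₁(Π)| · ‖Δ‖_F, where J₁(Π) is the set of indices (i,j) with Π_{ij} ≠ 0 and ‖A‖₁,₁ = Σ_{i,j}|A_{ij}|. -/
open BigOperators Matrix
open scoped Classical

noncomputable def enorm {p : ℕ} (v : Fin p → ℝ) : ℝ := Real.sqrt (∑ i, (v i) ^ 2)

noncomputable def fnorm {p : ℕ} (A : Matrix (Fin p) (Fin p) ℝ) : ℝ :=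
  Real.sqrt (∑ i, ∑ j, (A i j) ^ 2)

def outer {p : ℕ} (u v : Fin p → ℝ) : Matrix (Fin p) (Fin p) ℝ :=
  Matrix.of fun i j => u i * v j

noncomputable def l11 {p : ℕ} (A : Matrix (Fin p) (Fin p) ℝ) : ℝ := ∑ i, ∑ j, |A i j|

theorem stmt2 {p : ℕ} (Δ Pm : Matrix (Fin p) (Fin p) ℝ) :
    l11 Δ - l11 (Δ + Pm) + l11 Pm ≤
      2 * Real.sqrt ((Set.ncard {ij : Fin p × Fin p | Pm ij.1 ij.2 ≠ 0} : ℝ)) * fnorm Δ := by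
  classical
  set S : Finset (Fin p × Fin p) := Finset.univ.filter (fun ij => Pm ij.1 ij.2 ≠ 0) with hS
  have hcard : ({ij : Fin p × Fin p | Pm ij.1 ij.2 ≠ 0} : Set (Fin p × Fin p)).ncard = S.card := by
    have : ({ij : Fin p × Fin p | Pm ij.1 ij.2 ≠ 0} : Set (Fin p × Fin p)) = ↑S := by
      ext ij; simp [hS]
    rw [this, Set.ncard_coe_finset]
  have hLHS : l11 Δ - l11 (Δ + Pm) + l11 Pm =
      ∑ ij ∈ (Finset.univ : Finset (Fin p × Fin p)),
        (|Δ ij.1 ij.2| - |Δ ij.1 ij.2 + Pm ij.1 ij.2| + |Pm ij.1 ij.2|) := by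
    simp only [l11, Matrix.add_apply, ← Finset.sum_product', Finset.univ_product_univ,
      Finset.sum_add_distrib, Finset.sum_sub_distrib]
  rw [hLHS]
  have hsplit : ∑ ij ∈ (Finset.univ : Finset (Fin p × Fin p)),
      (|Δ ij.1 ij.2| - |Δ ij.1 ij.2 + Pm ij.1 ij.2| + |Pm ij.1 ij.2|)
      = ∑ ij ∈ S, (|Δ ij.1 ij.2| - |Δ ij.1 ij.2 + Pm ij.1 ij.2| + |Pm ij.1 ij.2|) := by
    rw [← Finset.sum_filter_add_sum_filter_not Finset.univ (fun ij => Pm ij.1 ij.2 ≠ 0)]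
    have h0 : ∑ ij ∈ Finset.univ.filter (fun ij : Fin p × Fin p => ¬ Pm ij.1 ij.2 ≠ 0),
        (|Δ ij.1 ij.2| - |Δ ij.1 ij.2 + Pm ij.1 ij.2| + |Pm ij.1 ij.2|) = 0 := by
      apply Finset.sum_eq_zero
      intro ij hij
      simp only [Finset.mem_filter, not_not] at hij
      rw [hij.2]
      simp
    rw [h0, add_zero]
  rw [hsplit]
  have hstep1 : ∑ ij ∈ S, (|Δ ij.1 ij.2| - |Δ ij.1 ij.2 + Pm ij.1 ij.2| + |Pm ij.1 ij.2|)
      ≤ ∑ ij ∈ S, 2 * |Δ ij.1 ij.2| := by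
    apply Finset.sum_le_sum
    intro ij _
    have h1 : |Pm ij.1 ij.2| - |Δ ij.1 ij.2 + Pm ij.1 ij.2| ≤ |Δ ij.1 ij.2| := by
      have := abs_sub_abs_le_abs_sub (Pm ij.1 ij.2) (Δ ij.1 ij.2 + Pm ij.1 ij.2)
      simpa [abs_sub_comm] using this
    linarith
  refine hstep1.trans ?_
  rw [← Finset.mul_sum]
  -- Cauchy-Schwarz
  have hcs : (∑ ij ∈ S, |Δ ij.1 ij.2|) ^ 2 ≤
      (S.card : ℝ) * ∑ ij ∈ S, (Δ ij.1 ij.2) ^ 2 := by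
    have := Finset.sum_mul_sq_le_sq_mul_sq S (fun _ => (1:ℝ)) (fun ij => |Δ ij.1 ij.2|)
    simp only [one_pow, one_mul, Finset.sum_const, nsmul_eq_mul, mul_one, sq_abs] at this
    exact this
  have hsum_nonneg : (0:ℝ) ≤ ∑ ij ∈ S, |Δ ij.1 ij.2| :=
    Finset.sum_nonneg fun _ _ => abs_nonneg _
  have h2 : ∑ ij ∈ S, |Δ ij.1 ij.2| ≤
      Real.sqrt (S.card : ℝ) * Real.sqrt (∑ ij ∈ S, (Δ ij.1 ij.2) ^ 2) := by
    rw [← Real.sqrt_mul (by positivity)]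
    rw [← Real.sqrt_sq hsum_nonneg]
    exact Real.sqrt_le_sqrt hcs
  have h3 : Real.sqrt (∑ ij ∈ S, (Δ ij.1 ij.2) ^ 2) ≤ fnorm Δ := by
    unfold fnorm
    apply Real.sqrt_le_sqrt
    rw [← Finset.sum_product']
    apply Finset.sum_le_sum_of_subset_of_nonneg
    · simp [hS, Finset.univ_product_univ]
    · intro ij _ _; positivity
  calc 2 * ∑ ij ∈ S, |Δ ij.1 ij.2|
      ≤ 2 * (Real.sqrt (S.card : ℝ) * Real.sqrt (∑ ij ∈ S, (Δ ij.1 ij.2) ^ 2)) := by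
        linarith
    _ ≤ 2 * (Real.sqrt (S.card : ℝ) * fnorm Δ) := by
        apply mul_le_mul_of_nonneg_left _ (by norm_num)
        exact mul_le_mul_of_nonneg_left h3 (Real.sqrt_nonneg _)
    _ = 2 * Real.sqrt ((Set.ncard {ij : Fin p × Fin p | Pm ij.1 ij.2 ≠ 0} : ℝ)) * fnorm Δ := by
        rw [hcard]; ring
end

section
/- Let Δ and Π be p×p matrices partitioned into I×I blocks with weights w_{kℓ} > 0. Then ‖Δ‖₁,₁* - ‖Δ + Π‖₁,₁* + ‖Π‖₁,₁* ≤ 2√(Σ_{(k,ℓ)∈J₂(Π)} w_{kℓ}²) · ‖Δ‖_F, where ‖A‖₁,₁* = Σ_{k,ℓ} w_{kℓ}‖A^{kℓ}‖_F and J₂(Π) is the set of block indices (k,ℓ) with Π^{kℓ} ≠ 0. -/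
/-
Blockwise, the reverse triangle inequality gives
`0 ≤ ‖Δᵏˡ‖ - ‖Δᵏˡ + Πᵏˡ‖ + ‖Πᵏˡ‖ ≤ 2‖Δᵏˡ‖`, and the middle quantity vanishes when `Πᵏˡ = 0`.
Hence the left-hand side is at most `2 ∑_{(k,l) ∈ J₂(Π)} |w_{kl}| ‖Δᵏˡ‖`, and Cauchy–Schwarz over the
blocks, together with `∑_{k,l} ‖Δᵏˡ‖² = ‖Δ‖_F²`, finishes the proof.
-/

open BigOperators Matrix
open scoped Classical

noncomputable def bnorm {p I : ℕ} (g : Fin p → Fin I) (A : Matrix (Fin p) (Fin p) ℝ)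
    (k l : Fin I) : ℝ :=
  Real.sqrt (∑ i, ∑ j, if g i = k ∧ g j = l then (A i j) ^ 2 else 0)

noncomputable def l11star {p I : ℕ} (g : Fin p → Fin I) (w : Fin I → Fin I → ℝ)
    (A : Matrix (Fin p) (Fin p) ℝ) : ℝ :=
  ∑ k, ∑ l, w k l * bnorm g A k l

section NormedGroup

variable {E : Type*} [SeminormedAddCommGroup E]

theorem norm_sub_norm_add_add_norm_nonneg (x y : E) : 0 ≤ ‖x‖ - ‖x + y‖ + ‖y‖ := by
  linarith [norm_add_le x y]

theorem norm_sub_norm_add_add_norm_le (x y : E) : ‖x‖ - ‖x + y‖ + ‖y‖ ≤ 2 * ‖x‖ := by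
  linarith [norm_le_add_norm_add' x y]

theorem mul_norm_sub_norm_add_add_norm_le (w : ℝ) (x y : E) :
    w * (‖x‖ - ‖x + y‖ + ‖y‖) ≤ |w| * (2 * ‖x‖) :=
  calc w * (‖x‖ - ‖x + y‖ + ‖y‖)
      ≤ |w| * (‖x‖ - ‖x + y‖ + ‖y‖) :=
        mul_le_mul_of_nonneg_right (le_abs_self w) (norm_sub_norm_add_add_norm_nonneg x y)
    _ ≤ |w| * (2 * ‖x‖) :=
        mul_le_mul_of_nonneg_left (norm_sub_norm_add_add_norm_le x y) (abs_nonneg w)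

end NormedGroup

section Blocks

variable {p I : ℕ} (g : Fin p → Fin I)

/-- The block `Aᵏˡ`, zero-padded to a vector in `ℝ^{p×p}`. -/
noncomputable def blockVec (A : Matrix (Fin p) (Fin p) ℝ) (k l : Fin I) :
    EuclideanSpace ℝ (Fin p × Fin p) :=
  WithLp.toLp 2 fun ij => if g ij.1 = k ∧ g ij.2 = l then A ij.1 ij.2 else 0

theorem bnorm_eq_norm_blockVec (A : Matrix (Fin p) (Fin p) ℝ) (k l : Fin I) :
    bnorm g A k l = ‖blockVec g A k l‖ := by
  rw [EuclideanSpace.norm_eq, bnorm, Fintype.sum_prod_type]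
  congr 1
  refine Finset.sum_congr rfl fun i _ => Finset.sum_congr rfl fun j _ => ?_
  by_cases h : g i = k ∧ g j = l <;> simp [blockVec, h, sq_abs]

theorem blockVec_add (A B : Matrix (Fin p) (Fin p) ℝ) (k l : Fin I) :
    blockVec g (A + B) k l = blockVec g A k l + blockVec g B k l := by
  ext ij
  by_cases h : g ij.1 = k ∧ g ij.2 = l <;> simp [blockVec, h]

theorem mul_bnorm_sub_bnorm_add_add_bnorm_le (w : ℝ) (Δ Pm : Matrix (Fin p) (Fin p) ℝ)
    (k l : Fin I) :
    w * bnorm g Δ k l - w * bnorm g (Δ + Pm) k l + w * bnorm g Pm k l ≤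
      (if bnorm g Pm k l ≠ 0 then |w| else 0) * (2 * bnorm g Δ k l) := by
  simp only [bnorm_eq_norm_blockVec, blockVec_add, ← mul_sub, ← mul_add]
  split_ifs with hPm
  · exact mul_norm_sub_norm_add_add_norm_le w _ _
  · rw [norm_eq_zero.mp (not_not.mp hPm)]
    simp

/-- Every entry lies in exactly one block, so the squared block norms add up to `‖A‖_F²`. -/
theorem sum_sum_bnorm_sq (A : Matrix (Fin p) (Fin p) ℝ) :
    ∑ k, ∑ l, bnorm g A k l ^ 2 = fnorm A ^ 2 := by
  have hsq : ∀ k l, bnorm g A k l ^ 2 =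
      ∑ i, ∑ j, if g i = k ∧ g j = l then A i j ^ 2 else 0 := fun k l =>
    Real.sq_sqrt (by positivity)
  rw [fnorm, Real.sq_sqrt (by positivity)]
  simp_rw [hsq, ite_and, Finset.sum_comm (γ := Fin I) (α := Fin p)]
  simp

end Blocks

theorem Real.sum_sum_mul_le_sqrt_mul_sqrt {ι κ : Type*} [Fintype ι] [Fintype κ]
    (f h : ι → κ → ℝ) :
    ∑ i, ∑ j, f i j * h i j ≤ √(∑ i, ∑ j, f i j ^ 2) * √(∑ i, ∑ j, h i j ^ 2) := by
  simpa only [Fintype.sum_prod_type] using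
    Real.sum_mul_le_sqrt_mul_sqrt Finset.univ (fun ij : ι × κ => f ij.1 ij.2)
      (fun ij => h ij.1 ij.2)

theorem stmt3_general {p I : ℕ} (g : Fin p → Fin I) (w : Fin I → Fin I → ℝ)
    (Δ Pm : Matrix (Fin p) (Fin p) ℝ) :
    l11star g w Δ - l11star g w (Δ + Pm) + l11star g w Pm ≤
      2 * Real.sqrt (∑ k, ∑ l, if bnorm g Pm k l ≠ 0 then (w k l) ^ 2 else 0) * fnorm Δ := by
  set c : Fin I → Fin I → ℝ := fun k l => if bnorm g Pm k l ≠ 0 then |w k l| else 0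
  have hc : ∀ k l, c k l ^ 2 = if bnorm g Pm k l ≠ 0 then w k l ^ 2 else 0 := fun k l => by
    simp only [c]; split_ifs <;> simp
  calc l11star g w Δ - l11star g w (Δ + Pm) + l11star g w Pm
      = ∑ k, ∑ l, (w k l * bnorm g Δ k l - w k l * bnorm g (Δ + Pm) k l
          + w k l * bnorm g Pm k l) := by
        simp only [l11star, Finset.sum_add_distrib, Finset.sum_sub_distrib]
    _ ≤ ∑ k, ∑ l, c k l * (2 * bnorm g Δ k l) :=
        Finset.sum_le_sum fun k _ => Finset.sum_le_sum fun l _ =>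
          mul_bnorm_sub_bnorm_add_add_bnorm_le g (w k l) Δ Pm k l
    _ = 2 * ∑ k, ∑ l, c k l * bnorm g Δ k l := by
        simp only [Finset.mul_sum]; ring_nf
    _ ≤ 2 * (√(∑ k, ∑ l, c k l ^ 2) * √(∑ k, ∑ l, bnorm g Δ k l ^ 2)) := by
        gcongr; exact Real.sum_sum_mul_le_sqrt_mul_sqrt _ _
    _ = _ := by
        simp only [hc, sum_sum_bnorm_sq, Real.sqrt_sq (Real.sqrt_nonneg _), fnorm]; ring

theorem stmt3 {p I : ℕ} (g : Fin p → Fin I) (w : Fin I → Fin I → ℝ)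
    (hw : ∀ k l, 0 < w k l) (Δ Pm : Matrix (Fin p) (Fin p) ℝ) :
    l11star g w Δ - l11star g w (Δ + Pm) + l11star g w Pm ≤
      2 * Real.sqrt (∑ k, ∑ l, if bnorm g Pm k l ≠ 0 then (w k l) ^ 2 else 0) * fnorm Δ :=
  stmt3_general g w Δ Pm
end

section
/- (Curvature lemma) Let A be a p×p real symmetric matrix with eigenvalues γ₁ ≥ γ₂ ≥ … ≥ γ_p and let E be the orthogonal projection onto the span of eigenvectors corresponding to the d largest eigenvalues. If δ := γ_d − γ_{d+1} > 0, then for every symmetric F with 0 ⪯ F ⪯ I and tr(F) = d, one has (δ/2)‖E − F‖_F² ≤ ⟨A, E − F⟩, where ⟨A,B⟩ = tr(AB^T). -/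
open BigOperators Matrix
open scoped Classical

/-!
Index the eigenpairs from `0`, so that `E = ∑_{k<d} vₖ vₖᵀ` and the gap is `δ = γ_{d-1} - γ_d`.
The diagonal `fₖ = vₖᵀ F vₖ` of `F` in the eigenbasis lies in `[0, 1]` and sums to `tr F = d`.
Then `⟨A, E - F⟩ = ∑_{k<d} γₖ (1 - fₖ) - ∑_{k≥d} γₖ fₖ`, where both sums carry the same total
weight `s = d - ∑_{k<d} fₖ`, so `⟨A, E - F⟩ ≥ δ s`. On the other side
`‖E - F‖² = d - 2 ∑_{k<d} fₖ + tr F² ≤ 2 s`, because `0 ⪯ F ⪯ I` gives `tr F² ≤ tr F = d`.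
-/

open Finset

lemma sub_mul_card_sub_sum_le {ι : Type*} [Fintype ι] [DecidableEq ι] (S : Finset ι)
    {γ f : ι → ℝ} {a b : ℝ}
    (hγS : ∀ k ∈ S, a ≤ γ k) (hγSc : ∀ k ∉ S, γ k ≤ b) (hf0 : ∀ k, 0 ≤ f k)
    (hf1 : ∀ k, f k ≤ 1) (hsum : ∑ k, f k = #S) :
    (a - b) * (#S - ∑ k ∈ S, f k) ≤ ∑ k, γ k * ((if k ∈ S then 1 else 0) - f k) := by
  have hcompl : ∑ k ∈ Sᶜ, f k = #S - ∑ k ∈ S, f k := by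
    linarith [sum_add_sum_compl S f]
  have hin :
      a * (#S - ∑ k ∈ S, f k) ≤ ∑ k ∈ S, γ k * ((if k ∈ S then 1 else 0) - f k) :=
    calc a * (#S - ∑ k ∈ S, f k) = ∑ k ∈ S, a * (1 - f k) := by
          rw [← mul_sum, sum_sub_distrib, sum_const, nsmul_one]
      _ ≤ _ := sum_le_sum fun k hk => by
          rw [if_pos hk]
          exact mul_le_mul_of_nonneg_right (hγS k hk) (sub_nonneg.2 (hf1 k))
  have hout :
      -(b * (#S - ∑ k ∈ S, f k)) ≤ ∑ k ∈ Sᶜ, γ k * ((if k ∈ S then 1 else 0) - f k) :=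
    calc -(b * (#S - ∑ k ∈ S, f k)) = ∑ k ∈ Sᶜ, -(b * f k) := by
          rw [sum_neg_distrib, ← mul_sum, hcompl]
      _ ≤ _ := sum_le_sum fun k hk => by
          rw [if_neg (mem_compl.1 hk), zero_sub, mul_neg, neg_le_neg_iff]
          exact mul_le_mul_of_nonneg_right (hγSc k (mem_compl.1 hk)) (hf0 k)
  rw [← sum_add_sum_compl S]
  linarith

lemma trace_mul_self_le_trace {n : Type*} [Fintype n] [DecidableEq n] {F : Matrix n n ℝ}
    (hF0 : F.PosSemidef) (hF1 : (1 - F).PosSemidef) : (F * F).trace ≤ F.trace := by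
  obtain ⟨B, rfl⟩ : ∃ B : Matrix n n ℝ, F = star B * B := by
    open scoped MatrixOrder in
    exact CStarAlgebra.nonneg_iff_eq_star_mul_self.mp hF0.nonneg
  have h := (hF1.mul_mul_conjTranspose_same B).trace_nonneg
  rw [trace_mul_cycle, mul_sub, mul_one, trace_sub, ← star_eq_conjTranspose] at h
  linarith

lemma Matrix.PosSemidef.transpose_eq_self {n : Type*} [Fintype n] {F : Matrix n n ℝ}
    (hF : F.PosSemidef) : Fᵀ = F :=
  (isHermitian_iff_isSymm.1 hF.1).eq

lemma fnorm_sq {p : ℕ} (M : Matrix (Fin p) (Fin p) ℝ) : fnorm M ^ 2 = (M * Mᵀ).trace := by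
  rw [fnorm, Real.sq_sqrt (by positivity)]
  simp only [trace, Matrix.diag, mul_apply, transpose_apply, sq]

section Outer

variable {p : ℕ}

lemma transpose_outer_self (u : Fin p → ℝ) : (outer u u)ᵀ = outer u u :=
  transpose_vecMulVec u u

lemma trace_outer_self_mul (u : Fin p → ℝ) (M : Matrix (Fin p) (Fin p) ℝ) :
    (outer u u * M).trace = u ⬝ᵥ M *ᵥ u := by
  rw [outer, ← vecMulVec.eq_def, vecMulVec_mul, trace_vecMulVec, dotProduct_comm,
    dotProduct_mulVec]

lemma dotProduct_outer_mulVec (x u w y : Fin p → ℝ) :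
    x ⬝ᵥ outer u w *ᵥ y = (x ⬝ᵥ u) * (w ⬝ᵥ y) := by
  simp only [outer, dotProduct, mulVec, of_apply, mul_sum, sum_mul]
  rw [sum_comm]
  exact sum_congr rfl fun i _ => sum_congr rfl fun j _ => by ring

lemma trace_sum_outer_self_mul {ι : Type*} (v : ι → Fin p → ℝ) (S : Finset ι)
    (M : Matrix (Fin p) (Fin p) ℝ) :
    ((∑ k ∈ S, outer (v k) (v k)) * M).trace = ∑ k ∈ S, v k ⬝ᵥ M *ᵥ v k := by
  simp only [sum_mul, trace_sum, trace_outer_self_mul]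

end Outer

section Orthonormal

variable {p : ℕ} {v : Fin p → Fin p → ℝ}

lemma sum_outer_self_eq_one (hv : ∀ k l, v k ⬝ᵥ v l = if k = l then (1 : ℝ) else 0) :
    ∑ k, outer (v k) (v k) = 1 := by
  have hrows : of v * (of v)ᵀ = 1 := by
    ext k l
    simpa [mul_apply, one_apply, dotProduct] using hv k l
  have hcols := mul_eq_one_comm.mp hrows
  ext i j
  rw [← hcols]
  simp [outer, mul_apply, Matrix.sum_apply]

lemma trace_eq_sum_dotProduct_mulVec (hv : ∀ k l, v k ⬝ᵥ v l = if k = l then (1 : ℝ) else 0)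
    (M : Matrix (Fin p) (Fin p) ℝ) : M.trace = ∑ k, v k ⬝ᵥ M *ᵥ v k := by
  rw [← trace_sum_outer_self_mul, sum_outer_self_eq_one hv, one_mul]

lemma dotProduct_sum_outer_self_mulVec
    (hv : ∀ k l, v k ⬝ᵥ v l = if k = l then (1 : ℝ) else 0) (S : Finset (Fin p))
    (k : Fin p) :
    v k ⬝ᵥ (∑ l ∈ S, outer (v l) (v l)) *ᵥ v k = if k ∈ S then 1 else 0 := by
  simp only [sum_mulVec, dotProduct_sum, dotProduct_outer_mulVec, hv]
  simp [eq_comm]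

lemma fnorm_sum_outer_self_sub_sq_le
    (hv : ∀ k l, v k ⬝ᵥ v l = if k = l then (1 : ℝ) else 0) (S : Finset (Fin p))
    {F : Matrix (Fin p) (Fin p) ℝ} (hF0 : F.PosSemidef) (hF1 : (1 - F).PosSemidef)
    (htr : F.trace = #S) :
    fnorm ((∑ k ∈ S, outer (v k) (v k)) - F) ^ 2 ≤
      2 * (#S - ∑ k ∈ S, v k ⬝ᵥ F *ᵥ v k) := by
  set P := ∑ k ∈ S, outer (v k) (v k)
  have hPt : Pᵀ = P := by simp only [P, transpose_sum, transpose_outer_self]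
  have hFt : Fᵀ = F := hF0.transpose_eq_self
  have hPP : (P * P).trace = #S := by
    simp [P, trace_sum_outer_self_mul, dotProduct_sum_outer_self_mulVec hv]
  have hFF := trace_mul_self_le_trace hF0 hF1
  rw [fnorm_sq, transpose_sub, hPt, hFt, sub_mul, mul_sub, mul_sub, trace_sub, trace_sub,
    trace_sub, trace_mul_comm F P, hPP, trace_sum_outer_self_mul]
  linarith

lemma dotProduct_mulVec_le_one (hv : ∀ k l, v k ⬝ᵥ v l = if k = l then (1 : ℝ) else 0)
    {F : Matrix (Fin p) (Fin p) ℝ} (hF1 : (1 - F).PosSemidef) (k : Fin p) :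
    v k ⬝ᵥ F *ᵥ v k ≤ 1 := by
  have h := hF1.dotProduct_mulVec_nonneg (v k)
  simp only [star_trivial, sub_mulVec, one_mulVec, dotProduct_sub, hv, if_pos] at h
  linarith

end Orthonormal

theorem stmt4 {p : ℕ} (A : Matrix (Fin p) (Fin p) ℝ) (γ : Fin p → ℝ) (v : Fin p → Fin p → ℝ)
    (hA : A = ∑ k, γ k • outer (v k) (v k))
    (hortho : ∀ k l, v k ⬝ᵥ v l = if k = l then (1 : ℝ) else 0)
    (hmono : Antitone γ)
    (d : ℕ) (hdp : d < p)
    (E : Matrix (Fin p) (Fin p) ℝ)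
    (hE : E = ∑ k ∈ Finset.univ.filter (fun k : Fin p => (k : ℕ) < d), outer (v k) (v k))
    (F : Matrix (Fin p) (Fin p) ℝ) (hF0 : F.PosSemidef)
    (hF1 : ((1 : Matrix (Fin p) (Fin p) ℝ) - F).PosSemidef) (htr : F.trace = (d : ℝ)) :
    (γ ⟨d - 1, by omega⟩ - γ ⟨d, hdp⟩) / 2 * (fnorm (E - F)) ^ 2 ≤ (A * (E - F)ᵀ).trace := by
  set S := univ.filter fun k : Fin p => (k : ℕ) < d
  have hcard : (#S : ℝ) = d := by simp [S, Fin.card_filter_val_lt, hdp.le]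
  have hEFt : (E - F)ᵀ = E - F := by
    simp only [hE, transpose_sub, transpose_sum, transpose_outer_self, hF0.transpose_eq_self]
  have hinner : (A * (E - F)ᵀ).trace
      = ∑ k, γ k * ((if k ∈ S then 1 else 0) - v k ⬝ᵥ F *ᵥ v k) := by
    rw [hEFt]
    simp only [hA, sum_mul, smul_mul, trace_sum, trace_smul, trace_outer_self_mul, hE,
      sub_mulVec, dotProduct_sub, dotProduct_sum_outer_self_mulVec hortho, smul_eq_mul]
  set δ := γ ⟨d - 1, by omega⟩ - γ ⟨d, hdp⟩
  have hδ : 0 ≤ δ := sub_nonneg.2 (hmono (Fin.mk_le_mk.2 (Nat.sub_le d 1)))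
  have hgap := sub_mul_card_sub_sum_le S (γ := γ) (a := γ ⟨d - 1, by omega⟩) (b := γ ⟨d, hdp⟩)
    (fun k hk => hmono (Fin.le_iff_val_le_val.2 (Nat.le_sub_one_of_lt (mem_filter.1 hk).2)))
    (fun k hk => hmono (Fin.mk_le_of_le_val (not_lt.1 fun h => hk (mem_filter.2 ⟨mem_univ k, h⟩))))
    (fun k => by simpa using hF0.dotProduct_mulVec_nonneg (v k))
    (dotProduct_mulVec_le_one hortho hF1)
    (by rw [← trace_eq_sum_dotProduct_mulVec hortho, htr, hcard])
  have hnorm := fnorm_sum_outer_self_sub_sq_le hortho S hF0 hF1 (htr.trans hcard.symm)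
  rw [← hE] at hnorm
  rw [hinner]
  linarith [mul_le_mul_of_nonneg_left hnorm hδ]
end

section
/- In the Fantope maximization max_{H ∈ F^d} ⟨A, H⟩ for a symmetric matrix A, the maximizer is unique if and only if γ_d > γ_{d+1}, in which case the unique maximizer is Σ_{j=1}^d v_j v_j^T where v_j are orthonormal eigenvectors for the top d eigenvalues. -/
open BigOperators Matrix
open scoped Classical

def inFantope {p : ℕ} (d : ℕ) (H : Matrix (Fin p) (Fin p) ℝ) : Prop :=
  H.IsSymm ∧ H.PosSemidef ∧ ((1 : Matrix (Fin p) (Fin p) ℝ) - H).PosSemidef ∧ H.trace = (d : ℝ)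

/-!
Write `w k = v k ⬝ᵥ H *ᵥ v k`. For `H` in the Fantope these weights lie in `[0, 1]` and sum to
`d`, and `tr (A H) = ∑ k, γ k * w k`. If a threshold `c` separates the eigenvalues indexed by `S`
(`#S = d`) from the others, then
`∑ k ∈ S, γ k - ∑ k, γ k * w k = ∑ k ∈ S, (γ k - c) (1 - w k) + ∑ k ∉ S, (c - γ k) w k ≥ 0`,
so the projection onto the top `d` eigenvectors is a maximizer. When `γ d < γ (d - 1)`
(indices from `0`) the threshold can be taken strictly in between, so at a maximizer every term
vanishes: `w` is the indicator of `S`, and positive semidefiniteness of `H` and `1 - H` turns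
this into `H *ᵥ v k = v k` or `0`. When `γ d = γ (d - 1)`, exchanging the indices `d - 1` and `d`
gives a second projection with the same value.
-/

open Finset

theorem trace_mul_vecMulVec {n : Type*} [Fintype n] (H : Matrix n n ℝ) (u w : n → ℝ) :
    (H * vecMulVec u w).trace = w ⬝ᵥ H *ᵥ u := by
  rw [mul_vecMulVec, trace_vecMulVec, dotProduct_comm]

theorem trace_mul_eq_sum {n : Type*} [Fintype n] {A : Matrix n n ℝ} {γ : n → ℝ}
    {v : n → n → ℝ} (hA : A = ∑ k, γ k • vecMulVec (v k) (v k)) (H : Matrix n n ℝ) :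
    (A * H).trace = ∑ k, γ k * (v k ⬝ᵥ H *ᵥ v k) := by
  subst hA
  simp only [Finset.sum_mul, trace_sum, smul_mul, trace_smul, trace_mul_comm (vecMulVec _ _),
    trace_mul_vecMulVec, smul_eq_mul]

section Orthonormal

variable {n : Type*} [Fintype n] [DecidableEq n] {v : n → n → ℝ}
  (hv : ∀ k l, v k ⬝ᵥ v l = if k = l then 1 else 0)
include hv

theorem sum_vecMulVec_self_eq_one : ∑ k, vecMulVec (v k) (v k) = 1 := by
  have hV : of v * (of v)ᵀ = 1 := by
    ext k l
    simpa [mul_apply, dotProduct, one_apply] using hv k l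
  have hV' : (of v)ᵀ * of v = 1 := mul_eq_one_comm.mp hV
  ext i j
  simpa [mul_apply, Matrix.sum_apply, vecMulVec_apply, mul_comm] using congrArg (· i j) hV'

theorem sum_vecMulVec_self_mulVec (S : Finset n) (j : n) :
    (∑ k ∈ S, vecMulVec (v k) (v k)) *ᵥ v j = if j ∈ S then v j else 0 := by
  simp [sum_mulVec, vecMulVec_mulVec, hv]

theorem eq_of_mulVec_eq {M N : Matrix n n ℝ} (h : ∀ k, M *ᵥ v k = N *ᵥ v k) : M = N := by
  rw [← M.mul_one, ← N.mul_one, ← sum_vecMulVec_self_eq_one hv]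
  simp only [Finset.mul_sum, mul_vecMulVec, h]

theorem sum_vecMulVec_self_injective :
    Function.Injective fun S : Finset n => ∑ k ∈ S, vecMulVec (v k) (v k) := by
  intro S T hST
  ext j
  have hj := congrArg (· *ᵥ v j) hST
  have hvj : v j ≠ 0 := fun h0 => by simpa [h0] using hv j j
  simp only [sum_vecMulVec_self_mulVec hv] at hj
  split_ifs at hj <;> simp_all

theorem trace_eq_sum_dotProduct_mulVec_s6 (H : Matrix n n ℝ) :
    H.trace = ∑ k, v k ⬝ᵥ H *ᵥ v k :=
  calc H.trace = (H * ∑ k, vecMulVec (v k) (v k)).trace := by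
        rw [sum_vecMulVec_self_eq_one hv, mul_one]
    _ = ∑ k, v k ⬝ᵥ H *ᵥ v k := by simp only [Finset.mul_sum, trace_sum, trace_mul_vecMulVec]

end Orthonormal

section Threshold

variable {ι : Type*} [DecidableEq ι] {S : Finset ι} {γ w : ι → ℝ} {c : ℝ}

theorem threshold_term_nonneg (hw0 : ∀ k, 0 ≤ w k) (hw1 : ∀ k, w k ≤ 1)
    (hS : ∀ k ∈ S, c ≤ γ k) (hSc : ∀ k ∉ S, γ k ≤ c) (k : ι) :
    0 ≤ if k ∈ S then (γ k - c) * (1 - w k) else (c - γ k) * w k := by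
  split_ifs with hk
  · exact mul_nonneg (sub_nonneg.2 (hS k hk)) (sub_nonneg.2 (hw1 k))
  · exact mul_nonneg (sub_nonneg.2 (hSc k hk)) (hw0 k)

variable [Fintype ι]

theorem sum_sub_sum_mul_eq_sum_threshold (hw : ∑ k, w k = #S) :
    ∑ k ∈ S, γ k - ∑ k, γ k * w k =
      ∑ k, if k ∈ S then (γ k - c) * (1 - w k) else (c - γ k) * w k := by
  have split (k : ι) : (if k ∈ S then (γ k - c) * (1 - w k) else (c - γ k) * w k) =
      (if k ∈ S then γ k - c else 0) + (c * w k - γ k * w k) := by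
    split_ifs <;> ring
  simp only [split, sum_add_distrib, sum_sub_distrib, ← mul_sum, hw, sum_ite_mem, univ_inter,
    sum_const, nsmul_eq_mul]
  ring

theorem sum_mul_le_sum_of_threshold (hw0 : ∀ k, 0 ≤ w k) (hw1 : ∀ k, w k ≤ 1)
    (hw : ∑ k, w k = #S) (hS : ∀ k ∈ S, c ≤ γ k) (hSc : ∀ k ∉ S, γ k ≤ c) :
    ∑ k, γ k * w k ≤ ∑ k ∈ S, γ k := by
  have hgap := sum_sub_sum_mul_eq_sum_threshold (γ := γ) (c := c) hw
  have := sum_nonneg fun k (_ : k ∈ univ) => threshold_term_nonneg hw0 hw1 hS hSc k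
  linarith

theorem eq_indicator_of_sum_mul_eq (hw0 : ∀ k, 0 ≤ w k) (hw1 : ∀ k, w k ≤ 1)
    (hw : ∑ k, w k = #S) (hS : ∀ k ∈ S, c < γ k) (hSc : ∀ k ∉ S, γ k < c)
    (heq : ∑ k, γ k * w k = ∑ k ∈ S, γ k) (k : ι) :
    w k = if k ∈ S then 1 else 0 := by
  have hzero := (sum_eq_zero_iff_of_nonneg fun k _ => threshold_term_nonneg hw0 hw1
    (fun k hk => (hS k hk).le) (fun k hk => (hSc k hk).le) k).mp
    (by rw [← sum_sub_sum_mul_eq_sum_threshold hw, heq, sub_self]) k (mem_univ k)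
  split_ifs at hzero ⊢ with hk
  · linarith [(mul_eq_zero.mp hzero).resolve_left (sub_ne_zero.2 (hS k hk).ne')]
  · exact (mul_eq_zero.mp hzero).resolve_left (sub_ne_zero.2 (hSc k hk).ne')

end Threshold

section Semidefinite

variable {n : Type*} [Fintype n] [DecidableEq n] {H : Matrix n n ℝ}

theorem dotProduct_mulVec_le_of_posSemidef_one_sub (h : (1 - H).PosSemidef) (u : n → ℝ) :
    u ⬝ᵥ H *ᵥ u ≤ u ⬝ᵥ u := by
  have := h.dotProduct_mulVec_nonneg u
  rw [star_trivial, sub_mulVec, one_mulVec, dotProduct_sub] at this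
  linarith

theorem mulVec_eq_self_of_posSemidef_one_sub (h : (1 - H).PosSemidef) {u : n → ℝ}
    (hu : u ⬝ᵥ H *ᵥ u = u ⬝ᵥ u) : H *ᵥ u = u := by
  have := (h.dotProduct_mulVec_zero_iff u).mp
    (by rw [star_trivial, sub_mulVec, one_mulVec, dotProduct_sub, hu, sub_self])
  rwa [sub_mulVec, one_mulVec, sub_eq_zero, eq_comm] at this

end Semidefinite

def IsFantopeMaximizer {p : ℕ} (A : Matrix (Fin p) (Fin p) ℝ) (d : ℕ)
    (H : Matrix (Fin p) (Fin p) ℝ) : Prop :=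
  inFantope d H ∧ ∀ H', inFantope d H' → (A * H').trace ≤ (A * H).trace

section Fantope

variable {p : ℕ} {A : Matrix (Fin p) (Fin p) ℝ} {γ : Fin p → ℝ} {v : Fin p → Fin p → ℝ}
  {H : Matrix (Fin p) (Fin p) ℝ} {d : ℕ}

theorem outer_eq_vecMulVec (u w : Fin p → ℝ) : outer u w = vecMulVec u w := rfl

theorem inFantope.dotProduct_mulVec_nonneg (hH : inFantope d H) (u : Fin p → ℝ) :
    0 ≤ u ⬝ᵥ H *ᵥ u := by
  simpa using hH.2.1.dotProduct_mulVec_nonneg u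

variable (hv : ∀ k l, v k ⬝ᵥ v l = if k = l then 1 else 0)
include hv

theorem inFantope_sum_vecMulVec (S : Finset (Fin p)) :
    inFantope #S (∑ k ∈ S, vecMulVec (v k) (v k)) := by
  have hpsd (T : Finset (Fin p)) : (∑ k ∈ T, vecMulVec (v k) (v k)).PosSemidef :=
    posSemidef_sum T fun k _ => by simpa using posSemidef_vecMulVec_self_star (v k)
  refine ⟨isHermitian_iff_isSymm.mp (hpsd S).isHermitian, hpsd S, ?_, ?_⟩
  · rw [← sum_vecMulVec_self_eq_one hv, ← sum_compl_add_sum S, add_sub_cancel_right]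
    exact hpsd Sᶜ
  · simp [trace_sum, hv]

theorem inFantope.dotProduct_mulVec_le_one (hH : inFantope d H) (k : Fin p) :
    v k ⬝ᵥ H *ᵥ v k ≤ 1 := by
  simpa [hv] using dotProduct_mulVec_le_of_posSemidef_one_sub hH.2.2.1 (v k)

theorem inFantope.sum_dotProduct_mulVec (hH : inFantope d H) : ∑ k, v k ⬝ᵥ H *ᵥ v k = d := by
  rw [← trace_eq_sum_dotProduct_mulVec_s6 hv, hH.2.2.2]

variable (hA : A = ∑ k, γ k • vecMulVec (v k) (v k))
include hA

theorem trace_mul_sum_vecMulVec (S : Finset (Fin p)) :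
    (A * ∑ k ∈ S, vecMulVec (v k) (v k)).trace = ∑ k ∈ S, γ k := by
  simp [trace_mul_eq_sum hA, sum_vecMulVec_self_mulVec hv, apply_ite, hv]

variable {S : Finset (Fin p)} {c : ℝ}

theorem isFantopeMaximizer_sum_vecMulVec (hS : ∀ k ∈ S, c ≤ γ k) (hSc : ∀ k ∉ S, γ k ≤ c) :
    IsFantopeMaximizer A #S (∑ k ∈ S, vecMulVec (v k) (v k)) := by
  refine ⟨inFantope_sum_vecMulVec hv S, fun H hH => ?_⟩
  rw [trace_mul_sum_vecMulVec hv hA, trace_mul_eq_sum hA]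
  exact sum_mul_le_sum_of_threshold (fun k => hH.dotProduct_mulVec_nonneg (v k))
    (hH.dotProduct_mulVec_le_one hv) (hH.sum_dotProduct_mulVec hv) hS hSc

theorem IsFantopeMaximizer.eq_sum_vecMulVec (hS : ∀ k ∈ S, c < γ k) (hSc : ∀ k ∉ S, γ k < c)
    (hH : IsFantopeMaximizer A #S H) : H = ∑ k ∈ S, vecMulVec (v k) (v k) := by
  have hle := (isFantopeMaximizer_sum_vecMulVec hv hA (fun k hk => (hS k hk).le)
    fun k hk => (hSc k hk).le).2 H hH.1
  have hw := eq_indicator_of_sum_mul_eq (fun k => hH.1.dotProduct_mulVec_nonneg (v k))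
    (hH.1.dotProduct_mulVec_le_one hv) (hH.1.sum_dotProduct_mulVec hv) hS hSc
    (by rw [← trace_mul_eq_sum hA, ← trace_mul_sum_vecMulVec hv hA S]
        exact le_antisymm hle (hH.2 _ (inFantope_sum_vecMulVec hv S)))
  refine eq_of_mulVec_eq hv fun k => ?_
  rw [sum_vecMulVec_self_mulVec hv]
  have hwk := hw k
  split_ifs at hwk ⊢
  · exact mulVec_eq_self_of_posSemidef_one_sub hH.1.2.2.1 (by simp [hwk, hv])
  · exact (hH.1.2.1.dotProduct_mulVec_zero_iff _).mp (by simpa using hwk)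

theorem not_existsUnique_isFantopeMaximizer (hS : ∀ k ∈ S, c ≤ γ k) (hSc : ∀ k ∉ S, γ k ≤ c)
    {i j : Fin p} (hi : i ∈ S) (hj : j ∉ S) (hγi : γ i = c) (hγj : γ j = c) :
    ¬ ∃! H, IsFantopeMaximizer A #S H := by
  set S' := insert j (S.erase i)
  have hcard : #S' = #S := by
    rw [card_insert_of_notMem (by simp [hj]), card_erase_add_one hi]
  have hS' : ∀ k ∈ S', c ≤ γ k := by
    simp only [S', mem_insert, mem_erase]
    rintro k (rfl | ⟨-, hk⟩)
    exacts [hγj.ge, hS k hk]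
  have hS'c : ∀ k ∉ S', γ k ≤ c := by
    simp only [S', mem_insert, mem_erase, not_or, not_and_or, not_not]
    rintro k ⟨-, rfl | hk⟩
    exacts [hγi.le, hSc k hk]
  rintro ⟨H, -, huniq⟩
  have hSS' := (huniq _ (isFantopeMaximizer_sum_vecMulVec hv hA hS hSc)).trans
    (huniq _ (hcard ▸ isFantopeMaximizer_sum_vecMulVec hv hA hS' hS'c)).symm
  exact hj (sum_vecMulVec_self_injective hv hSS' ▸ mem_insert_self j _)

end Fantope

theorem stmt6 {p : ℕ} (A : Matrix (Fin p) (Fin p) ℝ) (γ : Fin p → ℝ) (v : Fin p → Fin p → ℝ)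
    (hA : A = ∑ k, γ k • outer (v k) (v k))
    (hortho : ∀ k l, v k ⬝ᵥ v l = if k = l then (1 : ℝ) else 0)
    (hmono : Antitone γ)
    (d : ℕ) (hd1 : 1 ≤ d) (hdp : d < p) :
    ((∃! H : Matrix (Fin p) (Fin p) ℝ,
        inFantope d H ∧ ∀ H' : Matrix (Fin p) (Fin p) ℝ,
          inFantope d H' → (A * H').trace ≤ (A * H).trace) ↔
      γ ⟨d, hdp⟩ < γ ⟨d - 1, by omega⟩) ∧
    (γ ⟨d, hdp⟩ < γ ⟨d - 1, by omega⟩ →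
      ∀ H : Matrix (Fin p) (Fin p) ℝ,
        (inFantope d H ∧ ∀ H' : Matrix (Fin p) (Fin p) ℝ,
          inFantope d H' → (A * H').trace ≤ (A * H).trace) →
        H = ∑ k ∈ Finset.univ.filter (fun k : Fin p => (k : ℕ) < d), outer (v k) (v k)) := by
  simp only [outer_eq_vecMulVec] at hA ⊢
  set T := univ.filter fun k : Fin p => (k : ℕ) < d
  set i : Fin p := ⟨d - 1, by omega⟩
  set j : Fin p := ⟨d, hdp⟩
  have hcard : #T = d := by
    rw [show T = Iio j by ext; simp [T, j, ← Fin.val_fin_lt], Fin.card_Iio]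
  have hTi : ∀ k ∈ T, γ i ≤ γ k := fun k hk =>
    hmono (by simp only [T, mem_filter, mem_univ, true_and] at hk; simp [i, Fin.le_def]; omega)
  have hTj : ∀ k ∉ T, γ k ≤ γ j := fun k hk => hmono (by simpa [T, j, Fin.le_def] using hk)
  have hji : γ j ≤ γ i := hmono (by simp [i, j, Fin.le_def])
  have hmax : IsFantopeMaximizer A d (∑ k ∈ T, vecMulVec (v k) (v k)) :=
    hcard ▸ isFantopeMaximizer_sum_vecMulVec hortho hA hTi fun k hk => (hTj k hk).trans hji
  have huniq (hgap : γ j < γ i) (H) (hH : IsFantopeMaximizer A d H) :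
      H = ∑ k ∈ T, vecMulVec (v k) (v k) :=
    IsFantopeMaximizer.eq_sum_vecMulVec hortho hA (c := (γ i + γ j) / 2)
      (fun k hk => by linarith [hTi k hk]) (fun k hk => by linarith [hTj k hk]) (hcard ▸ hH)
  refine ⟨⟨fun hU => ?_, fun hgap => ⟨_, hmax, huniq hgap⟩⟩, huniq⟩
  by_contra hgap
  have heq : γ j = γ i := le_antisymm hji (not_lt.mp hgap)
  exact not_existsUnique_isFantopeMaximizer hortho hA hTi (fun k hk => heq ▸ hTj k hk)
    (i := i) (j := j) (by simp [T, i]; omega) (by simp [T, j]) rfl heq (hcard ▸ hU)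
end

section
/- Let H be a symmetric p×p matrix with 0 ⪯ H ⪯ I and tr(H) = 1 (i.e., H in the Fantope F¹), let \hat{v} be its top unit eigenvector, and let v be any unit vector. Then ‖\hat{v}\hat{v}^T − vv^T‖_F ≤ 2‖vv^T − H‖_F. -/
open BigOperators Matrix
open scoped Classical

/-! For a unit vector `u`, `‖uuᵀ - H‖_F² = 1 + ‖H‖_F² - 2 uᵀHu`, so the top eigenvector `v̂`,
which maximizes `uᵀHu`, is at least as close to `H` as `vvᵀ` is. The triangle inequality through
`H` then gives `‖v̂v̂ᵀ - vvᵀ‖_F ≤ ‖v̂v̂ᵀ - H‖_F + ‖H - vvᵀ‖_F ≤ 2 ‖vvᵀ - H‖_F`. -/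

section Frobenius

attribute [local instance] Matrix.frobeniusNormedAddCommGroup

theorem fnorm_eq_frobenius_norm {p : ℕ} (A : Matrix (Fin p) (Fin p) ℝ) : fnorm A = ‖A‖ := by
  simp [fnorm, frobenius_norm_def, Real.sqrt_eq_rpow]

theorem fnorm_sub_le_add {p : ℕ} (A B C : Matrix (Fin p) (Fin p) ℝ) :
    fnorm (A - C) ≤ fnorm (A - B) + fnorm (B - C) := by
  simpa only [fnorm_eq_frobenius_norm] using norm_sub_le_norm_sub_add_norm_sub A B C

theorem fnorm_sub_comm {p : ℕ} (A B : Matrix (Fin p) (Fin p) ℝ) :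
    fnorm (A - B) = fnorm (B - A) := by
  simpa only [fnorm_eq_frobenius_norm] using norm_sub_rev A B

end Frobenius

theorem sum_sq_eq_one_of_enorm_eq_one {p : ℕ} {u : Fin p → ℝ} (hu : _root_.enorm u = 1) :
    ∑ i, u i ^ 2 = 1 := by
  rwa [_root_.enorm, Real.sqrt_eq_one] at hu

theorem sum_sq_outer_self_sub {p : ℕ} (u : Fin p → ℝ) (H : Matrix (Fin p) (Fin p) ℝ) :
    ∑ i, ∑ j, (outer u u - H) i j ^ 2
      = (∑ i, u i ^ 2) ^ 2 + ∑ i, ∑ j, H i j ^ 2 - 2 * (u ⬝ᵥ H *ᵥ u) := by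
  have hentry : ∀ i j, (outer u u - H) i j ^ 2
      = u i ^ 2 * u j ^ 2 + H i j ^ 2 - 2 * (u i * (H i j * u j)) := fun i j => by
    simp only [Matrix.sub_apply, outer, of_apply]; ring
  simp only [hentry, Finset.sum_add_distrib, Finset.sum_sub_distrib, ← Finset.mul_sum, sq,
    Finset.sum_mul_sum, dotProduct, mulVec]

theorem fnorm_outer_self_sub_le_of_le {p : ℕ} (H : Matrix (Fin p) (Fin p) ℝ) {u w : Fin p → ℝ}
    (hu : _root_.enorm u = 1) (hw : _root_.enorm w = 1) (huw : w ⬝ᵥ H *ᵥ w ≤ u ⬝ᵥ H *ᵥ u) :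
    fnorm (outer u u - H) ≤ fnorm (outer w w - H) := by
  apply Real.sqrt_le_sqrt
  rw [sum_sq_outer_self_sub, sum_sq_outer_self_sub, sum_sq_eq_one_of_enorm_eq_one hu,
    sum_sq_eq_one_of_enorm_eq_one hw]
  linarith

theorem stmt12_general {p : ℕ} (H : Matrix (Fin p) (Fin p) ℝ)
    (vh : Fin p → ℝ) (hvh : _root_.enorm vh = 1)
    (htop : ∀ x : Fin p → ℝ, _root_.enorm x = 1 → x ⬝ᵥ (H *ᵥ x) ≤ vh ⬝ᵥ (H *ᵥ vh))
    (v : Fin p → ℝ) (hv : _root_.enorm v = 1) :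
    fnorm (outer vh vh - outer v v) ≤ 2 * fnorm (outer v v - H) := by
  have hcloser : fnorm (outer vh vh - H) ≤ fnorm (outer v v - H) :=
    fnorm_outer_self_sub_le_of_le H hvh hv (htop v hv)
  calc fnorm (outer vh vh - outer v v)
      ≤ fnorm (outer vh vh - H) + fnorm (H - outer v v) := fnorm_sub_le_add _ H _
    _ ≤ 2 * fnorm (outer v v - H) := by rw [fnorm_sub_comm H]; linarith

theorem stmt12 {p : ℕ} (H : Matrix (Fin p) (Fin p) ℝ)
    (hsymm : H.IsSymm) (hpsd : H.PosSemidef)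
    (h1 : ((1 : Matrix (Fin p) (Fin p) ℝ) - H).PosSemidef) (htr : H.trace = 1)
    (vh : Fin p → ℝ) (hvh : _root_.enorm vh = 1) (μ : ℝ) (heig : H *ᵥ vh = μ • vh)
    (htop : ∀ x : Fin p → ℝ, _root_.enorm x = 1 → x ⬝ᵥ (H *ᵥ x) ≤ vh ⬝ᵥ (H *ᵥ vh))
    (v : Fin p → ℝ) (hv : _root_.enorm v = 1) :
    fnorm (outer vh vh - outer v v) ≤ 2 * fnorm (outer v v - H) :=
  stmt12_general H vh hvh htop v hv
end
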